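/- arXiv:2407.05629 — 5 statements merged into one kernel-verified Lean document; each statement's English description precedes it below -/
import Mathlib

section
/- Let R be a Noetherian commutative ring and let f, g be elements of R such that f is a non-zero divisor. If R contains an infinite field k (as a subring of units together with 0), then there exists a nonzero element r of k such that f + r·g is a non-zero divisor in R. -/
/-- Let `R` be a Noetherian commutative ring and `f, g ∈ R` with `f` a
non-zero divisor. If `R` contains an infinite field `K`, then there exists a nonzero
`r ∈ K` such that `f + r·g` is a non-zero divisor of `R`. -/
theorem nonZeroDivisor_add_smul_of_infinite_field
    {R K : Type*} [CommRing R] [IsNoetherianRing R]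
    [Field K] [Infinite K] [Algebra K R]
    (f g : R) (hf : f ∈ nonZeroDivisors R) :
    ∃ r : K, r ≠ 0 ∧ f + algebraMap K R r * g ∈ nonZeroDivisors R := by
  classical
  rcases subsingleton_or_nontrivial R with hR | hR
  · exact ⟨1, one_ne_zero, mem_nonZeroDivisors_iff_right.mpr fun x _ => Subsingleton.elim x 0⟩
  by_contra hcon
  push_neg at hcon
  -- the infinite type of nonzero elements of K
  set T : Set K := ({0} : Set K)ᶜ with hT
  haveI : Infinite T := Set.infinite_coe_iff.mpr ((Set.finite_singleton (0 : K)).infinite_compl)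
  have hTne : ∀ r : T, (r : K) ≠ 0 := fun r h => r.2 (by rw [h]; exact Set.mem_singleton 0)
  -- for each nonzero r, a prime annihilator containing f + r g
  have key : ∀ r : T, ∃ (P : Ideal R) (z : R), P.IsPrime ∧
      P = (Submodule.span R {z}).annihilator ∧ z ≠ 0 ∧
      f + algebraMap K R (r : K) * g ∈ P := by
    intro r
    have hbad := hcon (r : K) (hTne r)
    rw [mem_nonZeroDivisors_iff_right] at hbad
    push_neg at hbad
    obtain ⟨x, hx1, hx0⟩ := hbad
    have hxmem : f + algebraMap K R (r : K) * g ∈ (Submodule.span R {x}).annihilator := by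
      rw [Submodule.mem_annihilator_span_singleton, smul_eq_mul, mul_comm _ x]
      exact hx1
    obtain ⟨P, hPa, hle⟩ :=
      exists_le_isAssociatedPrime_of_isNoetherianRing R x hx0
    obtain ⟨hP, w, hw0⟩ := isAssociatedPrime_iff.mp hPa
    have hw : P = (Submodule.span R {w}).annihilator := by
      rw [hw0]; ext a
      rw [Submodule.mem_colon_singleton, Submodule.mem_bot,
        Submodule.mem_annihilator_span_singleton]
    refine ⟨P, w, hP, hw, ?_, hle (by
      rw [Submodule.mem_colon_singleton, Submodule.mem_bot,
        ← Submodule.mem_annihilator_span_singleton]; exact hxmem)⟩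
    rintro rfl
    apply hP.ne_top
    rw [hw, Submodule.span_singleton_eq_bot.mpr rfl, Submodule.annihilator_bot]
  choose P z hP hPz hz0 hmem using key
  -- nonzero elements of K map to units
  have hunit : ∀ (u : K), u ≠ 0 → IsUnit (algebraMap K R u) := fun u hu =>
    (isUnit_iff_ne_zero.mpr hu).map (algebraMap K R)
  -- f is in no P r
  have hfP : ∀ r : T, f ∉ P r := by
    intro r hfr
    rw [hPz r, Submodule.mem_annihilator_span_singleton, smul_eq_mul,
      mul_comm f (z r)] at hfr
    exact hz0 r (mem_nonZeroDivisors_iff_right.mp hf _ hfr)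
  -- an infinite family of indices
  let e : ℕ ↪ T := Infinite.natEmbedding T
  -- the chain of spans of the z's stabilizes
  let N : ℕ →o Submodule R R :=
    ⟨fun n => Submodule.span R ((Finset.range (n + 1)).image (fun i => z (e i)) : Set R),
     fun m n hmn => Submodule.span_mono (by
        intro a ha
        simp only [Finset.coe_image, Set.mem_image, Finset.mem_coe, Finset.mem_range] at ha ⊢
        obtain ⟨i, hi, rfl⟩ := ha
        exact ⟨i, by omega, rfl⟩)⟩
  obtain ⟨n, hn⟩ := monotone_stabilizes_iff_noetherian.mpr (inferInstance : IsNoetherian R R) N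
  -- z (e (n+1)) lies in N n
  have hzmem : z (e (n + 1)) ∈ N n := by
    rw [hn (n + 1) (by omega)]
    exact Submodule.subset_span (by
      simp only [Finset.coe_image, Set.mem_image, Finset.mem_coe, Finset.mem_range]
      exact ⟨n + 1, by omega, rfl⟩)
  -- the product c kills every generator of N n
  set c : R := ∏ i ∈ Finset.range (n + 1), (f + algebraMap K R ((e i : T) : K) * g) with hc
  have hckill : c ∈ (N n).annihilator := by
    show c ∈ (Submodule.span R _).annihilator
    rw [Submodule.mem_annihilator_span]
    rintro ⟨a, ha⟩
    simp only [Finset.coe_image, Set.mem_image, Finset.mem_coe, Finset.mem_range] at ha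
    obtain ⟨i, hi, rfl⟩ := ha
    have hcPei : c ∈ P (e i) := by
      rw [hc, ← Finset.prod_erase_mul _ _ (Finset.mem_range.mpr hi)]
      exact Ideal.mul_mem_left _ _ (hmem (e i))
    have h2 : c ∈ (Submodule.span R {z (e i)}).annihilator := hPz (e i) ▸ hcPei
    rw [Submodule.mem_annihilator_span_singleton] at h2
    exact h2
  -- hence c ∈ P (e (n+1)), which is prime
  have hcP : c ∈ P (e (n + 1)) := by
    rw [hPz]
    exact Submodule.annihilator_mono
      (Submodule.span_le.mpr (Set.singleton_subset_iff.mpr hzmem)) hckill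
  obtain ⟨i, hi, hiP⟩ := ((hP (e (n + 1))).prod_mem_iff).mp hcP
  -- f + r_i g and f + r_{n+1} g both lie in the prime P (e (n+1))
  have hne : ((e i : T) : K) ≠ ((e (n + 1) : T) : K) := by
    intro h
    have h2 := e.injective (Subtype.ext h)
    rw [Finset.mem_range] at hi
    omega
  have hgP : g ∈ P (e (n + 1)) := by
    have hdiff : (algebraMap K R ((e i : T) : K) - algebraMap K R ((e (n + 1) : T) : K)) * g
        ∈ P (e (n + 1)) := by
      have h3 := (P (e (n + 1))).sub_mem hiP (hmem (e (n + 1)))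
      convert h3 using 1
      ring
    rw [← map_sub] at hdiff
    rcases (hP (e (n + 1))).mem_or_mem hdiff with h | h
    · exact absurd (Ideal.eq_top_of_isUnit_mem _ h (hunit _ (sub_ne_zero.mpr hne)))
        (hP (e (n + 1))).ne_top
    · exact h
  have hfPmem : f ∈ P (e (n + 1)) := by
    have h4 := (P (e (n + 1))).sub_mem (hmem (e (n + 1)))
      (Ideal.mul_mem_left _ (algebraMap K R ((e (n + 1) : T) : K)) hgP)
    simpa using h4
  exact hfP (e (n + 1)) hfPmem
end

section
/- Let R be a commutative ring, let J be an R-submodule of the total quotient ring Q(R) that is finitely generated and contains a non-zero divisor of R (a fractional ideal). Define J^{-1} = {a ∈ Q(R) : a·J ⊆ R}. Then tr_R(J) = J · J^{-1}, where J · J^{-1} denotes the ideal of R generated by all products a·b with a ∈ J, b ∈ J^{-1}. -/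
open scoped nonZeroDivisors

lemma key_identity {R : Type*} [CommRing R]
    (J : Submodule R (FractionRing R)) (φ : J →ₗ[R] R) (a b : J) :
    algebraMap R (FractionRing R) (φ a) * (b : FractionRing R)
      = algebraMap R (FractionRing R) (φ b) * (a : FractionRing R) := by
  set K := FractionRing R
  set f := algebraMap R K
  obtain ⟨⟨r, s⟩, hrs⟩ := IsLocalization.surj (nonZeroDivisors R) (a : K)
  obtain ⟨⟨u, t⟩, hut⟩ := IsLocalization.surj (nonZeroDivisors R) (b : K)
  have hs : IsUnit (f s) := IsLocalization.map_units K s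
  have ht : IsUnit (f t) := IsLocalization.map_units K t
  have hmr : f r ∈ J := by
    rw [← hrs]
    have := J.smul_mem (s : R) a.2
    rwa [Algebra.smul_def, mul_comm] at this
  have hmu : f u ∈ J := by
    rw [← hut]
    have := J.smul_mem (t : R) b.2
    rwa [Algebra.smul_def, mul_comm] at this
  have ea : (s : R) • a = ⟨f r, hmr⟩ := by
    ext
    simp only [SetLike.val_smul, Algebra.smul_def]
    rw [mul_comm]; exact hrs
  have eb : (t : R) • b = ⟨f u, hmu⟩ := by
    ext
    simp only [SetLike.val_smul, Algebra.smul_def]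
    rw [mul_comm]; exact hut
  have core : (u : R) * φ ⟨f r, hmr⟩ = r * φ ⟨f u, hmu⟩ := by
    have h1 : (u : R) • (⟨f r, hmr⟩ : J) = r • ⟨f u, hmu⟩ := by
      ext
      simp only [SetLike.val_smul, Algebra.smul_def, ← map_mul, mul_comm]
      rfl
    calc (u : R) * φ ⟨f r, hmr⟩ = φ ((u : R) • ⟨f r, hmr⟩) := by rw [map_smul]; rfl
      _ = φ (r • ⟨f u, hmu⟩) := by rw [h1]
      _ = r * φ ⟨f u, hmu⟩ := by rw [map_smul]; rfl
  apply (hs.mul ht).mul_left_cancel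
  calc f s * f t * (f (φ a) * b)
      = (f (φ ((s:R) • a)) * ((b:K) * f t)) := by
        rw [map_smul, smul_eq_mul, map_mul]; ring
    _ = f (φ ⟨f r, hmr⟩) * f u := by rw [ea, hut]
    _ = f (φ ⟨f r, hmr⟩ * u) := by rw [map_mul]
    _ = f (r * φ ⟨f u, hmu⟩) := by rw [mul_comm, core]
    _ = f r * f (φ ⟨f u, hmu⟩) := by rw [map_mul]
    _ = f s * f t * (f (φ b) * a) := by
        rw [← hrs, ← eb]
        rw [map_smul, smul_eq_mul, map_mul]; ring

/-- The trace ideal of an `R`-module `M`: the sum of the images of all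
`R`-linear maps `M → R`. -/
def traceIdeal (R M : Type*) [CommRing R] [AddCommGroup M] [Module R M] : Ideal R :=
  ⨆ φ : M →ₗ[R] R, LinearMap.range φ

/-- Let `J` be a fractional ideal of `R`, i.e. a finitely generated
`R`-submodule of the total quotient ring `Q(R) = FractionRing R` containing (the image
of) a non-zero divisor of `R`.  Then `tr_R(J) = J·J⁻¹`, where
`J⁻¹ = (1 : Submodule R Q(R)) / J = {a ∈ Q(R) : a·J ⊆ R}` and the product `J·J⁻¹` is
identified with an ideal of `R` by pulling back along `R → Q(R)`. -/
theorem traceIdeal_fractionalIdeal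
    {R : Type*} [CommRing R] [IsNoetherianRing R]
    (J : Submodule R (FractionRing R)) (hJfg : J.FG)
    (hJreg : ∃ x ∈ nonZeroDivisors R, algebraMap R (FractionRing R) x ∈ J) :
    traceIdeal R ↥J =
      Submodule.comap (Algebra.linearMap R (FractionRing R))
        (J * ((1 : Submodule R (FractionRing R)) / J)) := by

  classical
  set K := FractionRing R
  set f := algebraMap R K with hf
  have hinj : Function.Injective f := IsFractionRing.injective R K
  obtain ⟨x, hx, hxJ⟩ := hJreg
  have hxu : IsUnit (f x) := IsLocalization.map_units K ⟨x, hx⟩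
  apply le_antisymm
  · -- traceIdeal ≤ J * (1/J)
    apply iSup_le
    intro φ
    rintro _ ⟨a, rfl⟩
    show f (φ a) ∈ J * (1 / J)
    set c : K := f (φ ⟨f x, hxJ⟩) * ↑hxu.unit⁻¹ with hc
    have hcmem : c ∈ (1 : Submodule R K) / J := by
      rw [Submodule.mem_div_iff_forall_mul_mem]
      intro b hb
      have hkey := key_identity J φ ⟨b, hb⟩ ⟨f x, hxJ⟩
      have : c * b = f (φ ⟨b, hb⟩) := by
        rw [hc]
        calc f (φ ⟨f x, hxJ⟩) * ↑hxu.unit⁻¹ * b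
            = f (φ ⟨f x, hxJ⟩) * b * ↑hxu.unit⁻¹ := by ring
          _ = f (φ ⟨b, hb⟩) * f x * ↑hxu.unit⁻¹ := by rw [← hkey]
          _ = f (φ ⟨b, hb⟩) * (↑hxu.unit * ↑hxu.unit⁻¹) := by
              rw [IsUnit.unit_spec]; ring
          _ = f (φ ⟨b, hb⟩) := by rw [Units.mul_inv, mul_one]
      rw [this, Submodule.one_eq_range]
      exact ⟨φ ⟨b, hb⟩, rfl⟩
    have hkey := key_identity J φ a ⟨f x, hxJ⟩
    have : f (φ a) = ↑a * c := by
      rw [hc]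
      calc f (φ a) = f (φ a) * (↑hxu.unit * ↑hxu.unit⁻¹) := by
            rw [Units.mul_inv, mul_one]
        _ = f (φ a) * f x * ↑hxu.unit⁻¹ := by rw [IsUnit.unit_spec]; ring
        _ = f (φ ⟨f x, hxJ⟩) * ↑a * ↑hxu.unit⁻¹ := by rw [hkey]
        _ = ↑a * (f (φ ⟨f x, hxJ⟩) * ↑hxu.unit⁻¹) := by ring
    rw [this]
    exact Submodule.mul_mem_mul a.2 hcmem
  · -- J * (1/J) ≤ traceIdeal (after comap)
    have hle : J * ((1 : Submodule R K) / J)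
        ≤ Submodule.map (Algebra.linearMap R K) (traceIdeal R J) := by
      rw [Submodule.mul_le]
      intro a ha c hc
      rw [Submodule.mem_div_iff_forall_mul_mem] at hc
      -- build φ : J →ₗ[R] R with f (φ b) = c * b
      set ψ : J →ₗ[R] K := c • J.subtype with hψ
      have hrange : ∀ b : J, ψ b ∈ LinearMap.range (Algebra.linearMap R K) := by
        intro b
        have := hc b b.2
        rw [Submodule.one_eq_range] at this
        simpa [hψ, smul_eq_mul] using this
      set φ : J →ₗ[R] R :=
        (LinearEquiv.ofInjective (Algebra.linearMap R K) hinj).symm.toLinearMap ∘ₗ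
          ψ.codRestrict (LinearMap.range (Algebra.linearMap R K)) hrange with hφ
      have hφeq : ∀ b : J, f (φ b) = c * b := by
        intro b
        have : (Algebra.linearMap R K) (φ b)
            = ↑((LinearEquiv.ofInjective (Algebra.linearMap R K) hinj)
                ((LinearEquiv.ofInjective (Algebra.linearMap R K) hinj).symm
                  ⟨ψ b, hrange b⟩)) := by
          rw [hφ]
          simp [LinearEquiv.ofInjective_apply]
          exact congrArg Subtype.val (LinearEquiv.apply_symm_apply (LinearEquiv.ofInjective (Algebra.linearMap R K) hinj) ⟨ψ b, hrange b⟩)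
        rw [LinearEquiv.apply_symm_apply] at this
        simpa [hψ, smul_eq_mul] using this
      refine ⟨φ ⟨a, ha⟩, ?_, ?_⟩
      · exact le_iSup (fun φ : J →ₗ[R] R => LinearMap.range φ) φ ⟨⟨a, ha⟩, rfl⟩
      · show f (φ ⟨a, ha⟩) = a * c
        rw [hφeq ⟨a, ha⟩, mul_comm]
    intro r hr
    rw [Submodule.mem_comap] at hr
    obtain ⟨t, ht, hft⟩ := hle hr
    have : t = r := hinj hft
    rwa [← this]
end

section
/- Let R be a commutative ring, I an ideal of R containing a non-zero divisor. Then tr_R(I) = I · I^{-1}, where I^{-1} = {a ∈ Q(R) : a·I ⊆ R}. -/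
/-- Let `I` be an ideal of `R` containing a non-zero divisor.  Then
`tr_R(I) = I·I⁻¹`, where `I⁻¹ = {a ∈ Q(R) : a·I ⊆ R}` is computed in the total
quotient ring `Q(R) = FractionRing R`, and the product `I·I⁻¹ ⊆ R` is identified with
an ideal of `R` by pulling back along `R → Q(R)`. -/
theorem traceIdeal_eq_mul_inv
    {R : Type*} [CommRing R] (I : Ideal R)
    (hreg : ∃ x ∈ nonZeroDivisors R, x ∈ I) :
    traceIdeal R ↥I =
      Submodule.comap (Algebra.linearMap R (FractionRing R))
        ((Submodule.map (Algebra.linearMap R (FractionRing R)) I) *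
          ((1 : Submodule R (FractionRing R)) /
            (Submodule.map (Algebra.linearMap R (FractionRing R)) I))) := by
  classical
  set K := FractionRing R
  have hfinj : Function.Injective (algebraMap R K) := IsFractionRing.injective R K
  have hfl : ∀ r : R, Algebra.linearMap R K r = algebraMap R K r := fun r => rfl
  apply le_antisymm
  · -- traceIdeal ≤ comap
    refine iSup_le fun φ => ?_
    rintro r ⟨⟨i, hi⟩, rfl⟩
    obtain ⟨x, hx, hxI⟩ := hreg
    obtain ⟨u, hu⟩ := (IsLocalization.map_units K ⟨x, hx⟩ :
      IsUnit (algebraMap R K x))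
    set b : K := algebraMap R K (φ ⟨x, hxI⟩) * ↑u⁻¹ with hb
    have key : ∀ j (hj : j ∈ I), b * algebraMap R K j = algebraMap R K (φ ⟨j, hj⟩) := by
      intro j hj
      have h1 : (j : R) • (⟨x, hxI⟩ : I) = x • (⟨j, hj⟩ : I) := by
        ext; simp [mul_comm]
      have h2 : j * φ ⟨x, hxI⟩ = x * φ ⟨j, hj⟩ := by
        rw [← smul_eq_mul, ← smul_eq_mul, ← map_smul, ← map_smul, h1]
      have h3 : algebraMap R K j * algebraMap R K (φ ⟨x, hxI⟩)
          = algebraMap R K x * algebraMap R K (φ ⟨j, hj⟩) := by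
        rw [← map_mul, ← map_mul, h2]
      calc b * algebraMap R K j
          = (algebraMap R K j * algebraMap R K (φ ⟨x, hxI⟩)) * ↑u⁻¹ := by ring
        _ = (algebraMap R K x * algebraMap R K (φ ⟨j, hj⟩)) * ↑u⁻¹ := by rw [h3]
        _ = (↑u * ↑u⁻¹) * algebraMap R K (φ ⟨j, hj⟩) := by rw [hu]; ring
        _ = algebraMap R K (φ ⟨j, hj⟩) := by simp
    have hbmem : b ∈ (1 : Submodule R K) / Submodule.map (Algebra.linearMap R K) I := by
      rw [Submodule.mem_div_iff_forall_mul_mem]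
      rintro y ⟨j, hj, rfl⟩
      rw [hfl, key j hj, Submodule.mem_one]
      exact ⟨φ ⟨j, hj⟩, rfl⟩
    have : algebraMap R K (φ ⟨i, hi⟩) = algebraMap R K i * b := by
      rw [mul_comm, key i hi]
    rw [Submodule.mem_comap]
    show algebraMap R K (φ ⟨i, hi⟩) ∈ _
    rw [this]
    exact Submodule.mul_mem_mul ⟨i, hi, rfl⟩ hbmem
  · -- comap ≤ traceIdeal
    have hle : (Submodule.map (Algebra.linearMap R K) I) *
        ((1 : Submodule R K) / Submodule.map (Algebra.linearMap R K) I)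
        ≤ Submodule.map (Algebra.linearMap R K) (traceIdeal R ↥I) := by
      rw [Submodule.mul_le]
      rintro y ⟨i, hi, rfl⟩ b hb
      have hbmem : ∀ j : I, b * algebraMap R K (j : R) ∈ (1 : Submodule R K) := by
        intro j
        exact Submodule.mem_div_iff_forall_mul_mem.mp hb _ ⟨j, j.2, rfl⟩
      choose g hg using fun j : I => (Submodule.mem_one).mp (hbmem j)
      have hg' : ∀ j : I, algebraMap R K (g j) = b * algebraMap R K (j : R) := hg
      let φ : ↥I →ₗ[R] R :=
        { toFun := g
          map_add' := by
            intro a c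
            apply hfinj
            simp only [hg', map_add, Submodule.coe_add, mul_add]
          map_smul' := by
            intro r a
            apply hfinj
            simp only [hg', RingHom.id_apply, Submodule.coe_smul_of_tower, smul_eq_mul,
              map_mul, Algebra.smul_def]
            ring }
      have hmem : g ⟨i, hi⟩ ∈ traceIdeal R ↥I :=
        (le_iSup (fun ψ : ↥I →ₗ[R] R => LinearMap.range ψ) φ) ⟨⟨i, hi⟩, rfl⟩
      refine ⟨g ⟨i, hi⟩, hmem, ?_⟩
      show algebraMap R K (g ⟨i, hi⟩) = algebraMap R K i * b
      rw [hg']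
      ring
    intro r hr
    have := hle hr
    obtain ⟨s, hs, hsr⟩ := this
    rwa [← hfinj hsr]
end

section
/- Let R be a Cohen–Macaulay semi-standard graded ring over a field k satisfying property (♮) (i.e., √(tr_R(ω_R)_1 · R) ⊇ m_R), and let x_1, …, x_r ∈ R be a homogeneous regular sequence with R' = R/(x_1,…,x_r). Then R' also satisfies (♮); the key step is: since tr_{R'}(ω_{R'}) ⊇ tr_R(ω_R)·R', one has √(tr_{R'}(ω_{R'})_1 R') ⊇ (√(tr_R(ω_R)_1 R))·R' = m_{R'}. -/
/-- Property `(♮)` passes to quotients by regular sequences.  Here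
`π : R →+* R'` is the (surjective) quotient map `R → R' = R/(x_1,…,x_r)` by a homogeneous
regular sequence, mapping degree-one elements to degree-one elements, `T = tr_R(ω_R)` and
`T' = tr_{R'}(ω_{R'})` are the trace ideals of the canonical modules, and
`m` is the graded maximal ideal of `R` (so `m.map π` is the graded maximal ideal of `R'`).
The key step:  since `tr_{R'}(ω_{R'}) ⊇ tr_R(ω_R)·R'`, property `(♮)` for `R`, i.e.
`m ≤ √(span (tr_R(ω_R))_1)`, yields `(♮)` for `R'`:
`m_{R'} ≤ √(span (tr_{R'}(ω_{R'}))_1)`. -/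
theorem natural_property_quotient_regular_sequence
    {R R' : Type*} [CommRing R] [CommRing R']
    (𝒜 : ℕ → AddSubgroup R) [GradedRing 𝒜]
    (𝒜' : ℕ → AddSubgroup R') [GradedRing 𝒜']
    (π : R →+* R') (hsurj : Function.Surjective π)
    (hdeg1 : ∀ x ∈ 𝒜 1, π x ∈ 𝒜' 1)
    (T : Ideal R) (T' : Ideal R')
    (hkey : T.map π ≤ T')
    (m : Ideal R)
    (hnat : m ≤ (Ideal.span {x : R | x ∈ T ∧ x ∈ 𝒜 1}).radical) :
    m.map π ≤ (Ideal.span {y : R' | y ∈ T' ∧ y ∈ 𝒜' 1}).radical := by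
  calc m.map π ≤ ((Ideal.span {x : R | x ∈ T ∧ x ∈ 𝒜 1}).radical).map π :=
        Ideal.map_mono hnat
    _ ≤ ((Ideal.span {x : R | x ∈ T ∧ x ∈ 𝒜 1}).map π).radical :=
        Ideal.map_radical_le π
    _ ≤ (Ideal.span {y : R' | y ∈ T' ∧ y ∈ 𝒜' 1}).radical := by
        apply Ideal.radical_mono
        rw [Ideal.map_span]
        apply Ideal.span_mono
        rintro _ ⟨x, ⟨hxT, hx1⟩, rfl⟩
        exact ⟨hkey (Ideal.mem_map_of_mem π hxT), hdeg1 x hx1⟩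
end

section
/- Let R be a Cohen–Macaulay positively graded ring over an infinite field k with graded maximal ideal m satisfying m² = 0 (so R is Artinian, dim R = 0). Then R is nearly Gorenstein: tr_R(ω_R) ⊇ m. Concretely, if m has k-dimension n, then ω_R has a homogeneous minimal generating set θ_1, …, θ_n in degree −1 together with one more socle element, and the R-linear map ω_R → R sending θ_i to the i-th minimal generator of m and the extra basis element to 0 witnesses m ⊆ tr(ω_R). -/
set_option maxHeartbeats 2000000 in
/-- Let `R` be a (graded Artinian) algebra over an infinite field `𝕜`
whose (unique) maximal ideal `m` satisfies `m² = 0`, and let `ω` be the canonical module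
of `R`, i.e. the Matlis dual of `R`: an `R`-module equipped with a perfect `𝕜`-bilinear
pairing `p : R → ω → 𝕜` satisfying `p (r·s) w = p s (r • w)`.  Then `R` is nearly
Gorenstein: `m ⊆ tr_R(ω)`. -/
theorem nearlyGorenstein_of_sq_maximal_eq_bot
    {𝕜 R ω : Type*} [Field 𝕜] [Infinite 𝕜] [CommRing R] [Algebra 𝕜 R]
    [FiniteDimensional 𝕜 R]
    [AddCommGroup ω] [Module R ω] [Module 𝕜 ω] [IsScalarTower 𝕜 R ω]
    (m : Ideal R) [m.IsMaximal]
    (hlocal : ∀ m' : Ideal R, m'.IsMaximal → m' = m)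
    (hm2 : m ^ 2 = ⊥)
    (p : R →ₗ[𝕜] ω →ₗ[𝕜] 𝕜)
    (hassoc : ∀ (r s : R) (w : ω), p (r * s) w = p s (r • w))
    (hnd1 : ∀ r : R, p r = 0 → r = 0)
    (hnd2 : ∀ w : ω, (∀ r : R, p r w = 0) → w = 0) :
    m ≤ traceIdeal R ω := by
  classical
  -- m² = 0 concretely
  have hmul : ∀ a ∈ m, ∀ b ∈ m, a * b = 0 := by
    intro a ha b hb
    have : a * b ∈ m ^ 2 := by
      rw [sq]; exact Ideal.mul_mem_mul ha hb
    rw [hm2] at this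
    exact this
  -- ω is finite dimensional
  have hflip_inj : Function.Injective p.flip := by
    rw [← LinearMap.ker_eq_bot]
    refine (Submodule.eq_bot_iff _).mpr fun w hw => ?_
    exact hnd2 w fun r => by simpa using LinearMap.congr_fun hw r
  haveI : FiniteDimensional 𝕜 ω := FiniteDimensional.of_injective p.flip hflip_inj
  -- p.flip is surjective
  have hrank : Module.finrank 𝕜 ω = Module.finrank 𝕜 (Module.Dual 𝕜 R) := by
    have hp_inj : Function.Injective p := by
      rw [← LinearMap.ker_eq_bot]
      exact (Submodule.eq_bot_iff _).mpr fun r hr => hnd1 r hr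
    have h1 := LinearMap.finrank_le_finrank_of_injective hflip_inj
    have h2 := LinearMap.finrank_le_finrank_of_injective hp_inj
    rw [Subspace.dual_finrank_eq] at h1
    rw [Subspace.dual_finrank_eq (V := ω)] at h2
    rw [Subspace.dual_finrank_eq]
    omega
  have hflip_surj : Function.Surjective p.flip :=
    (LinearMap.injective_iff_surjective_of_finrank_eq_finrank hrank).mp hflip_inj
  -- the residue field
  letI instF : Field (R ⧸ m) := Ideal.Quotient.field m
  haveI : FiniteDimensional 𝕜 (R ⧸ m) :=
    Module.Finite.of_surjective (Ideal.Quotient.mkₐ 𝕜 m).toLinearMap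
      Ideal.Quotient.mk_surjective
  -- the submodule m as an R-module is torsion by m
  have hM : Module.IsTorsionBySet R (↥m) (m : Set R) := by
    intro x a
    have h0 : (a : R) * (x : R) = 0 := hmul a a.2 x x.2
    ext
    simpa [Submodule.coe_smul, smul_eq_mul] using h0
  letI instLM : Module (R ⧸ m) (↥m) := hM.module
  haveI towLM : IsScalarTower 𝕜 (R ⧸ m) (↥m) := hM.isScalarTower
  haveI : FiniteDimensional 𝕜 (↥m) :=
    inferInstanceAs (FiniteDimensional 𝕜 (↥(m.restrictScalars 𝕜)))
  haveI : FiniteDimensional (R ⧸ m) (↥m) := FiniteDimensional.right 𝕜 (R ⧸ m) (↥m)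
  -- the dual of m as an L := R/m module, by precomposition
  have hcomm : ∀ (c : R ⧸ m) (k : 𝕜) (x : ↥m), c • (k • x) = k • (c • x) := by
    intro c k x
    rw [← algebraMap_smul (R ⧸ m) k x, ← mul_smul, mul_comm, mul_smul,
      algebraMap_smul (R ⧸ m) k (c • x)]
  let μ : (R ⧸ m) → (↥m →ₗ[𝕜] ↥m) := fun c =>
    { toFun := fun x => c • x
      map_add' := fun x y => smul_add c x y
      map_smul' := fun k x => hcomm c k x }
  letI instLD : Module (R ⧸ m) (Module.Dual 𝕜 (↥m)) :=
    { smul := fun c f => f ∘ₗ μ c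
      one_smul := fun f => by ext x; show f ((1 : R ⧸ m) • x) = f x; rw [one_smul]
      mul_smul := fun c d f => by
        ext x
        show f ((c * d) • x) = f (d • c • x)
        rw [mul_comm, mul_smul]
      smul_zero := fun c => by ext x; rfl
      smul_add := fun c f g => by ext x; rfl
      add_smul := fun c d f => by
        ext x
        show f ((c + d) • x) = f (c • x) + f (d • x)
        rw [add_smul, map_add]
      zero_smul := fun f => by
        ext x
        show f ((0 : R ⧸ m) • x) = 0
        rw [zero_smul, map_zero] }
  haveI towLD : IsScalarTower 𝕜 (R ⧸ m) (Module.Dual 𝕜 (↥m)) := by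
    constructor
    intro k c f
    ext x
    show f ((k • c) • x) = k • f (c • x)
    rw [smul_assoc, map_smul]
  haveI : FiniteDimensional (R ⧸ m) (Module.Dual 𝕜 (↥m)) :=
    FiniteDimensional.right 𝕜 (R ⧸ m) (Module.Dual 𝕜 (↥m))
  -- equal L-dimensions
  have hfr : Module.finrank (R ⧸ m) (Module.Dual 𝕜 (↥m))
      = Module.finrank (R ⧸ m) (↥m) := by
    have h1 : Module.finrank 𝕜 (R ⧸ m) * Module.finrank (R ⧸ m) (↥m)
        = Module.finrank 𝕜 (↥m) := Module.finrank_mul_finrank 𝕜 (R ⧸ m) (↥m)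
    have h2 : Module.finrank 𝕜 (R ⧸ m)
        * Module.finrank (R ⧸ m) (Module.Dual 𝕜 (↥m))
        = Module.finrank 𝕜 (Module.Dual 𝕜 (↥m)) :=
      Module.finrank_mul_finrank 𝕜 (R ⧸ m) (Module.Dual 𝕜 (↥m))
    have h3 : Module.finrank 𝕜 (Module.Dual 𝕜 (↥m))
        = Module.finrank 𝕜 (↥m) := Subspace.dual_finrank_eq
    have hpos : 0 < Module.finrank 𝕜 (R ⧸ m) := Module.finrank_pos
    rw [h3, ← h1] at h2
    exact Nat.eq_of_mul_eq_mul_left hpos h2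
  let e : Module.Dual 𝕜 (↥m) ≃ₗ[R ⧸ m] ↥m := LinearEquiv.ofFinrankEq _ _ hfr
  -- the map T : ω → Dual 𝕜 m
  let T : ω →ₗ[𝕜] Module.Dual 𝕜 (↥m) :=
    { toFun := fun w => (p.flip w) ∘ₗ ((m.subtype).restrictScalars 𝕜)
      map_add' := fun w₁ w₂ => by
        ext x
        show p (x : R) (w₁ + w₂) = p (x : R) w₁ + p (x : R) w₂
        exact map_add _ _ _
      map_smul' := fun c w => by
        ext x
        show p (x : R) (c • w) = c • p (x : R) w
        exact map_smul _ _ _ }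
  have hT_apply : ∀ (w : ω) (x : ↥m), T w x = p (x : R) w := fun _ _ => rfl
  -- T is semilinear over L
  have hT_semi : ∀ (r : R) (w : ω), T (r • w) = (Ideal.Quotient.mk m r) • (T w) := by
    intro r w
    ext x
    show p (x : R) (r • w) = T w ((Ideal.Quotient.mk m r) • x)
    have h1 : (Ideal.Quotient.mk m r) • x = r • x := hM.mk_smul r x
    rw [h1, hT_apply]
    have h2 : ((r • x : ↥m) : R) = r * (x : R) := rfl
    rw [h2, hassoc]
  -- T is surjective
  have hT_surj : Function.Surjective T := by
    intro f
    obtain ⟨F, hF⟩ := LinearMap.exists_extend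
      (p := m.restrictScalars 𝕜) (V' := 𝕜) f
    obtain ⟨w, hw⟩ := hflip_surj F
    refine ⟨w, ?_⟩
    ext x
    have h1 : p (x : R) w = F (x : R) := by rw [← hw]; rfl
    have h2 : F (x : R) = f x := LinearMap.congr_fun hF x
    rw [hT_apply]
    exact h1.trans h2
  -- the R-linear map φ : ω → R
  let φ : ω →ₗ[R] R :=
    { toFun := fun w => ((e (T w)) : R)
      map_add' := fun w₁ w₂ => by
        show ((e (T (w₁ + w₂)) : ↥m) : R) = ((e (T w₁) : ↥m) : R) + ((e (T w₂) : ↥m) : R)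
        rw [map_add, map_add, Submodule.coe_add]
      map_smul' := fun r w => by
        show ((e (T (r • w)) : ↥m) : R) = (RingHom.id R) r • ((e (T w) : ↥m) : R)
        simp only [RingHom.id_apply]
        rw [hT_semi r w, map_smul]
        have h1 : (Ideal.Quotient.mk m r) • e (T w) = r • e (T w) := hM.mk_smul r _
        rw [h1, Submodule.coe_smul, smul_eq_mul] }
  intro x hx
  have hxrange : x ∈ LinearMap.range φ := by
    obtain ⟨w, hw⟩ := hT_surj (e.symm ⟨x, hx⟩)
    refine ⟨w, ?_⟩
    show ((e (T w)) : R) = x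
    rw [hw, LinearEquiv.apply_symm_apply]
  exact le_iSup (fun ψ : ω →ₗ[R] R => LinearMap.range ψ) φ hxrange
end
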